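/- arXiv:2106.07422 — 4 statements merged into one kernel-verified Lean document; each statement's English description precedes it below -/
import Mathlib

section
/- Let α₃, α₄ ∈ ℤ[√2] be coprime. (i) For all β₁, β₂, β₁', β₂' ∈ ℤ[√2]: 𝓛_{v(β₁,β₂)} = 𝓛_{v(β₁',β₂')} if and only if −α₄β₁ + α₃β₂ = −α₄β₁' + α₃β₂'. (ii) For all β₁, β₂ ∈ ℤ[√2]: v(β₁,β₂) ∈ 𝓛_{v(0,1)} if and only if there exists x ∈ ℤ[√2] with β₁ = xα₃ and β₂ = 1 + xα₄. -/
open MeasureTheory Matrix Set Pointwise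

noncomputable section

/-- The real embedding of `ℤ[√2]`, `a + b√2 ↦ a + b√2`. -/
def emb (α : Zsqrtd 2) : ℝ := (α.re : ℝ) + (α.im : ℝ) * Real.sqrt 2

/-- The Galois-conjugate embedding `σ`, `a + b√2 ↦ a − b√2`. -/
def embc (α : Zsqrtd 2) : ℝ := (α.re : ℝ) - (α.im : ℝ) * Real.sqrt 2

/-- The fundamental unit `λ = 1 + √2`. -/
def lam : ℝ := 1 + Real.sqrt 2

/-- `𝓛'`: the Minkowski embedding of `ℤ[√2]` in `ℝ²`. -/
def Lp : Set (ℝ × ℝ) := {p | ∃ α : Zsqrtd 2, p = (emb α, embc α)}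

/-- `v(β₁,β₂) = (β₁, β₂, σ(β₁), σ(β₂))`. -/
def latvec (β₁ β₂ : Zsqrtd 2) : Fin 4 → ℝ := ![emb β₁, emb β₂, embc β₁, embc β₂]

/-- `𝓛`: the Minkowski embedding of `ℤ[√2]²` in `ℝ⁴`. -/
def Lquad : Set (Fin 4 → ℝ) := {v | ∃ β₁ β₂ : Zsqrtd 2, v = latvec β₁ β₂}

/-- `𝓛h`, for a 4×4 real matrix `h` (row vectors, right multiplication). -/
def latimage (h : Matrix (Fin 4) (Fin 4) ℝ) : Set (Fin 4 → ℝ) :=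
  (fun v => Matrix.vecMul v h) '' Lquad

def nmat (x : ℝ) : Matrix (Fin 2) (Fin 2) ℝ := !![1, x; 0, 1]
def amat (y : ℝ) : Matrix (Fin 2) (Fin 2) ℝ := !![y, 0; 0, y⁻¹]
def kmat (θ : ℝ) : Matrix (Fin 2) (Fin 2) ℝ :=
  !![Real.cos θ, -Real.sin θ; Real.sin θ, Real.cos θ]

/-- Block diagonal 4×4 matrix from two 2×2 blocks. -/
def bd (A B : Matrix (Fin 2) (Fin 2) ℝ) : Matrix (Fin 4) (Fin 4) ℝ :=
  !![A 0 0, A 0 1, 0, 0;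
     A 1 0, A 1 1, 0, 0;
     0, 0, B 0 0, B 0 1;
     0, 0, B 1 0, B 1 1]

/-- `h(x₁,x₂,y₁,y₂,θ₁,θ₂) = diag(n(x₁)a(y₁)k(θ₁), n(x₂)a(y₂)k(θ₂))`. -/
def hmat (x₁ x₂ y₁ y₂ θ₁ θ₂ : ℝ) : Matrix (Fin 4) (Fin 4) ℝ :=
  bd (nmat x₁ * amat y₁ * kmat θ₁) (nmat x₂ * amat y₂ * kmat θ₂)

/-- `H = SL₂(ℝ)² ⊂ SL₄(ℝ)` (block diagonal). -/
def Hset : Set (Matrix (Fin 4) (Fin 4) ℝ) :=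
  {h | ∃ A B : Matrix (Fin 2) (Fin 2) ℝ, A.det = 1 ∧ B.det = 1 ∧ h = bd A B}

/-- `Γ_K = {diag(A, σ(A)) : A ∈ SL₂(ℤ[√2])}`. -/
def GammaK : Set (Matrix (Fin 4) (Fin 4) ℝ) :=
  {g | ∃ A : Matrix (Fin 2) (Fin 2) (Zsqrtd 2), A.det = 1 ∧ g = bd (A.map emb) (A.map embc)}

/-- `𝒲`: the open regular octagon of side length √2. -/
def Woct : Set (ℝ × ℝ) :=
  {p | |p.1| < lam / Real.sqrt 2 ∧ |p.2| < lam / Real.sqrt 2 ∧ |p.1| + |p.2| < lam}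

/-- `𝒲' = 𝒲 ∖ (√2−1)𝒲`. -/
def Wp : Set (ℝ × ℝ) := Woct \ ((Real.sqrt 2 - 1) • Woct)

/-- `θ̂ = 48√2/π⁴`, the density of visible points. -/
def thetaHat : ℝ := 48 * Real.sqrt 2 / Real.pi ^ 4

/-- `T(s)`: open triangle with vertices `(0,0)`, `(s/θ̂)^{1/2}(1,±1)`. -/
def Tset (s : ℝ) : Set (ℝ × ℝ) :=
  {p | 0 < p.1 ∧ p.1 < Real.sqrt (s / thetaHat) ∧ |p.2| < p.1}

/-- `𝔉`: a fundamental domain of `𝓛'`. -/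
def Fdom : Set (ℝ × ℝ) :=
  {p | ∃ r₁ ∈ Set.Ico (0:ℝ) 1, ∃ r₂ ∈ Set.Ico (0:ℝ) 1,
    p = (1 + r₁ + r₂ * Real.sqrt 2, 2 + r₁ - r₂ * Real.sqrt 2)}

/-- The Siegel domain `𝔇_t`. -/
def Dset (t : ℝ) : Set (Matrix (Fin 4) (Fin 4) ℝ) :=
  {h | ∃ x₁ x₂ y₁ y₂ θ₁ θ₂ : ℝ, (x₁, x₂) ∈ Fdom ∧ 0 < y₁ ∧ 0 < y₂ ∧ t ≤ y₁ * y₂ ∧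
    lam ^ (-2 : ℤ) ≤ y₁ / y₂ ∧ y₁ / y₂ ≤ lam ^ 2 ∧
    θ₁ ∈ Set.Ico 0 Real.pi ∧ θ₂ ∈ Set.Ico 0 Real.pi ∧ h = hmat x₁ x₂ y₁ y₂ θ₁ θ₂}

/-- Row vector times 2×2 matrix, on `ℝ × ℝ`. -/
def mul2 (p : ℝ × ℝ) (M : Matrix (Fin 2) (Fin 2) ℝ) : ℝ × ℝ :=
  (p.1 * M 0 0 + p.2 * M 1 0, p.1 * M 0 1 + p.2 * M 1 1)

/-- `r(s)`: the unique integer with `λ^{2r} ≤ s^{1/4} < λ^{2(r+1)}`. -/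
def rr (s : ℝ) : ℤ := ⌊Real.logb (lam ^ 2) (s ^ ((1:ℝ)/4))⌋

/-- `𝒯(s)` with explicit integer `r`: `λ^{−2r}T(s) × λ^{2r}𝒲`. -/
def calT (s : ℝ) (r : ℤ) : Set (Fin 4 → ℝ) :=
  {v | (lam ^ (2*r) * v 0, lam ^ (2*r) * v 1) ∈ Tset s ∧
       (lam ^ (-(2*r)) * v 2, lam ^ (-(2*r)) * v 3) ∈ Woct}

/-- `𝒯(s) = λ^{−2r(s)}T(s) × λ^{2r(s)}𝒲`. -/
def calTs (s : ℝ) : Set (Fin 4 → ℝ) := calT s (rr s)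

/-- Euclidean norm on `ℝ⁴`. -/
def enorm4 (v : Fin 4 → ℝ) : ℝ := Real.sqrt (∑ i, (v i) ^ 2)

/-- `𝓛h̃ = (ℤ(y₁,0,y₂,0) + ℤ√2(y₁,0,−y₂,0) + ℝ(0,1,0,0) + ℝ(0,0,0,1))·diag(k(θ₁),k(θ₂))`. -/
def Ltilde (y₁ y₂ θ₁ θ₂ : ℝ) : Set (Fin 4 → ℝ) :=
  {v | ∃ (m n : ℤ) (c₁ c₂ : ℝ),
    v = Matrix.vecMul ![((m:ℝ) + (n:ℝ) * Real.sqrt 2) * y₁, c₁,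
          ((m:ℝ) - (n:ℝ) * Real.sqrt 2) * y₂, c₂] (bd (kmat θ₁) (kmat θ₂))}

open Classical in
/-- Real-valued indicator of a proposition. -/
def ind (P : Prop) : ℝ := if P then 1 else 0

/-- `c_H = 3/π⁴`. -/
def cH : ℝ := 3 / Real.pi ^ 4

/-- `Y_t = {(y₁,y₂) : y₁,y₂ > 0, y₁y₂ ≥ t, y₁/y₂ ∈ (λ⁻²,λ²)}`. -/
def Yt (t : ℝ) : Set (ℝ × ℝ) :=
  {y | 0 < y.1 ∧ 0 < y.2 ∧ t ≤ y.1 * y.2 ∧ lam ^ (-2:ℤ) < y.1 / y.2 ∧ y.1 / y.2 < lam ^ 2}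

/-- The main term `G_M(s)` (depending on the Siegel-domain parameter `t`). -/
def GM (t s : ℝ) : ℝ :=
  cH * ∫ θ₂ in Set.Ico (0:ℝ) Real.pi, ∫ θ₁ in Set.Ico (0:ℝ) Real.pi, ∫ y in Yt t, ∫ x in Fdom,
    (y.1 ^ 3 * y.2 ^ 3)⁻¹ * ind (Ltilde y.1 y.2 θ₁ θ₂ ∩ calTs s = ∅)

/-- The error term `G_E(s)`. -/
def GE (t s : ℝ) : ℝ :=
  cH * ∫ θ₂ in Set.Ico (0:ℝ) Real.pi, ∫ θ₁ in Set.Ico (0:ℝ) Real.pi, ∫ y in Yt t, ∫ x in Fdom,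
    (y.1 ^ 3 * y.2 ^ 3)⁻¹ *
      ind (latimage (hmat x.1 x.2 y.1 y.2 θ₁ θ₂) ∩ calTs s = ∅ ∧
           (Ltilde y.1 y.2 θ₁ θ₂ ∩ calTs s).Nonempty)

/-- `J = [0,π/4] ∪ [3π/4,π)`. -/
def Jset : Set ℝ := Set.Icc 0 (Real.pi/4) ∪ Set.Ico (3*Real.pi/4) Real.pi

/-- `Y = {(y₁,y₂) : y₁ > 0, 1 < y₂ < λ²}`. -/
def Yset : Set (ℝ × ℝ) := {y | 0 < y.1 ∧ 1 < y.2 ∧ y.2 < lam ^ 2}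

/-- `T₁`: open triangle with vertices `(0,0)`, `(1,±1)`. -/
def T1 : Set (ℝ × ℝ) := {p | 0 < p.1 ∧ p.1 < 1 ∧ |p.2| < p.1}

/-- `ℓ₁(θ₁)`: first-coordinate projection of `θ̂^{−1/2}T₁k(−θ₁)`. -/
def ell1 (θ₁ : ℝ) : Set ℝ :=
  {x | ∃ p ∈ T1, x = (mul2 ((Real.sqrt thetaHat)⁻¹ • p) (kmat (-θ₁))).1}

/-- `ℓ₂(θ₂)`: first-coordinate projection of `𝒲k(−θ₂)`. -/
def ell2 (θ₂ : ℝ) : Set ℝ := {x | ∃ p ∈ Woct, x = (mul2 p (kmat (-θ₂))).1}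

/-- `C_𝒫 = 2304(2−√2)/π⁸`. -/
def CP : ℝ := 2304 * (2 - Real.sqrt 2) / Real.pi ^ 8

/-- `ζ_K(2) = π⁴/(48√2)`. -/
def zetaK2 : ℝ := Real.pi ^ 4 / (48 * Real.sqrt 2)

/-- `𝒯'(s) = T(s) × 𝒲`. -/
def Tprime (s : ℝ) : Set (Fin 4 → ℝ) :=
  {v | (v 0, v 1) ∈ Tset s ∧ (v 2, v 3) ∈ Woct}

/-- `L₁(θ₁)` from Lemma 3.4: projection of `λ^{−2r}T(s)k(−θ₁)` onto the x-axis. -/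
def L1set (s : ℝ) (r : ℤ) (θ₁ : ℝ) : Set ℝ :=
  {x | ∃ p ∈ Tset s, x = (mul2 ((lam ^ (-(2*r)) : ℝ) • p) (kmat (-θ₁))).1}

/-- `L₂(θ₂)`: projection of `λ^{2r}𝒲k(−θ₂)` onto the x-axis. -/
def L2set (r : ℤ) (θ₂ : ℝ) : Set ℝ :=
  {x | ∃ p ∈ Woct, x = (mul2 ((lam ^ (2*r) : ℝ) • p) (kmat (-θ₂))).1}

/-- `n(x)a(y)k(θ)` where `y,θ` are determined by `y⁻¹(sin θ, cos θ) = z`. -/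
def hz (z : ℝ × ℝ) (x : ℝ) : Matrix (Fin 2) (Fin 2) ℝ :=
  nmat x * amat (Real.sqrt (z.1 ^ 2 + z.2 ^ 2))⁻¹ *
    !![(Real.sqrt (z.1 ^ 2 + z.2 ^ 2))⁻¹ * z.2, -((Real.sqrt (z.1 ^ 2 + z.2 ^ 2))⁻¹ * z.1);
       (Real.sqrt (z.1 ^ 2 + z.2 ^ 2))⁻¹ * z.1, (Real.sqrt (z.1 ^ 2 + z.2 ^ 2))⁻¹ * z.2]

/-- The function `F₂` of Lemma 4.7. -/
def F2 (z₁ : ℝ) : ℝ :=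
  (24 / Real.pi ^ 4) * ∫ z₂ in Set.Ioo (-z₁) z₁, ∫ w in Wp, ∫ x in Fdom,
    ind (latimage (bd (hz (z₁, z₂) x.1) (hz w x.2)) ∩ Tprime (z₁ ^ 2 * thetaHat) = ∅)

/-- The box `B(α₃,α₄)`. -/
def Bbox (α₃ α₄ : Zsqrtd 2) (C₁ s : ℝ) : Set (ℝ × ℝ) :=
  {x | |x.1 + emb α₄ / emb α₃| ≤ C₁ / Real.sqrt s ∧
       |x.2 + embc α₄ / embc α₃| ≤ C₁ / Real.sqrt s}

/-- The matrix `h` determined by `s, z₂, w, x₁, x₂` via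
`y₁⁻¹(sin θ₁, cos θ₁) = λ^{−2r}(θ̂^{−1/2}s^{1/2}, z₂)`, `y₂⁻¹(sin θ₂, cos θ₂) = λ^{2r}w`. -/
def hfull (s z₂ : ℝ) (w : ℝ × ℝ) (x₁ x₂ : ℝ) : Matrix (Fin 4) (Fin 4) ℝ :=
  bd (hz ((lam ^ (-(2 * rr s)) : ℝ) • (Real.sqrt (s / thetaHat), z₂)) x₁)
     (hz ((lam ^ (2 * rr s) : ℝ) • w) x₂)

/-- `F⁺_{(α₃,α₄)}(s)`. -/
def Fplus (α₃ α₄ : Zsqrtd 2) (C₁ s : ℝ) : ℝ :=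
  (Real.sqrt s)⁻¹ * ∫ z₂ in Set.Ioo (0:ℝ) (Real.sqrt (s / thetaHat)), ∫ w in Wp,
    ∫ x in Bbox α₃ α₄ C₁ s, ind (latimage (hfull s z₂ w x.1 x.2) ∩ calTs s = ∅)

/-- `F⁻_{(α₃,α₄)}(s)`. -/
def Fminus (α₃ α₄ : Zsqrtd 2) (C₁ s : ℝ) : ℝ :=
  (Real.sqrt s)⁻¹ * ∫ z₂ in Set.Ioo (-Real.sqrt (s / thetaHat)) (0:ℝ), ∫ w in Wp,
    ∫ x in Bbox α₃ α₄ C₁ s, ind (latimage (hfull s z₂ w x.1 x.2) ∩ calTs s = ∅)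

/-- `F_{(α₃,α₄)}(s)`. -/
def Ffull (α₃ α₄ : Zsqrtd 2) (C₁ s : ℝ) : ℝ :=
  (Real.sqrt s)⁻¹ *
    ∫ z₂ in Set.Ioo (-Real.sqrt (s / thetaHat)) (Real.sqrt (s / thetaHat)), ∫ w in Wp,
      ∫ x in Bbox α₃ α₄ C₁ s, ind (latimage (hfull s z₂ w x.1 x.2) ∩ calTs s = ∅)

/-- `v₁ = (α₃, α₄, σ(α₃), σ(α₄))`. -/
def vv1 (α₃ α₄ : Zsqrtd 2) : Fin 4 → ℝ := ![emb α₃, emb α₄, embc α₃, embc α₄]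

/-- `v₂ = (√2α₃, √2α₄, −√2σ(α₃), −√2σ(α₄))`. -/
def vv2 (α₃ α₄ : Zsqrtd 2) : Fin 4 → ℝ :=
  ![Real.sqrt 2 * emb α₃, Real.sqrt 2 * emb α₄,
    -(Real.sqrt 2 * embc α₃), -(Real.sqrt 2 * embc α₄)]

/-- `b₁ = (α₃, α₄, 0, 0)`. -/
def bb1 (α₃ α₄ : Zsqrtd 2) : Fin 4 → ℝ := ![emb α₃, emb α₄, 0, 0]

/-- `b₂ = (0, 0, σ(α₃), σ(α₄))`. -/
def bb2 (α₃ α₄ : Zsqrtd 2) : Fin 4 → ℝ := ![0, 0, embc α₃, embc α₄]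

/-- The subgrid `𝓛_v = v + ℤv₁ + ℤv₂`. -/
def Lv (α₃ α₄ : Zsqrtd 2) (v : Fin 4 → ℝ) : Set (Fin 4 → ℝ) :=
  {u | ∃ m n : ℤ, u = v + (m:ℝ) • vv1 α₃ α₄ + (n:ℝ) • vv2 α₃ α₄}

/-- The filled plane `Π_v = v + ℝb₁ + ℝb₂`. -/
def Piv (α₃ α₄ : Zsqrtd 2) (v : Fin 4 → ℝ) : Set (Fin 4 → ℝ) :=
  {u | ∃ c₁ c₂ : ℝ, u = v + c₁ • bb1 α₃ α₄ + c₂ • bb2 α₃ α₄}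

/-- `d(s) = θ̂^{−1/2}λ^{−2r}s^{1/2}`. -/
def ds (s : ℝ) : ℝ := lam ^ (-(2 * rr s)) * Real.sqrt (s / thetaHat)

/-- The explicit integral representation `Φ(s)` of the limiting gap distribution `F(s)`. -/
def Phi (s : ℝ) : ℝ :=
  (1 / ((2:ℝ) ^ ((11:ℝ)/2) * Real.sqrt thetaHat * zetaK2 * Real.sqrt s)) *
    ∫ z₂ in Set.Ioo (-Real.sqrt (s / thetaHat)) (Real.sqrt (s / thetaHat)), ∫ w in Wp,
      ∫ x in Fdom, ind (latimage (hfull s z₂ w x.1 x.2) ∩ calTs s = ∅)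


lemma hs2 : Real.sqrt 2 * Real.sqrt 2 = 2 := Real.mul_self_sqrt (by norm_num)

lemma pair_inj {x y : Zsqrtd 2} (h1 : emb x = emb y) (h2 : embc x = embc y) : x = y := by
  have hre : (x.re : ℝ) = y.re := by unfold emb embc at *; linarith
  have him : (x.im : ℝ) * Real.sqrt 2 = y.im * Real.sqrt 2 := by unfold emb embc at *; linarith
  have hs0 : Real.sqrt 2 ≠ 0 := by positivity
  have him' : (x.im : ℝ) = y.im := mul_right_cancel₀ hs0 him
  exact Zsqrtd.ext (by exact_mod_cast hre) (by exact_mod_cast him')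

lemma latvec_inj {a b c d : Zsqrtd 2} (h : latvec a b = latvec c d) : a = c ∧ b = d := by
  have h0 := congrFun h 0
  have h1 := congrFun h 1
  have h2 := congrFun h 2
  have h3 := congrFun h 3
  simp [latvec] at h0 h1 h2 h3
  exact ⟨pair_inj h0 h2, pair_inj h1 h3⟩

lemma latvec_shift (α₃ α₄ β₁ β₂ : Zsqrtd 2) (γ : Zsqrtd 2) :
    latvec (β₁ + γ * α₃) (β₂ + γ * α₄) =
      latvec β₁ β₂ + (γ.re : ℝ) • vv1 α₃ α₄ + (γ.im : ℝ) • vv2 α₃ α₄ := by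
  funext i
  fin_cases i <;>
    simp [latvec, vv1, vv2, emb, embc, Zsqrtd.re_mul, Zsqrtd.im_mul] <;>
    push_cast <;> ring_nf <;>
    simp [Real.sq_sqrt (by norm_num : (0:ℝ) ≤ 2)]

lemma mem_Lv_iff (α₃ α₄ β₁ β₂ β₁' β₂' : Zsqrtd 2) :
    latvec β₁ β₂ ∈ Lv α₃ α₄ (latvec β₁' β₂') ↔
      ∃ γ : Zsqrtd 2, β₁ = β₁' + γ * α₃ ∧ β₂ = β₂' + γ * α₄ := by
  constructor
  · rintro ⟨m, n, h⟩
    refine ⟨⟨m, n⟩, ?_⟩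
    rw [show ((m:ℝ) • vv1 α₃ α₄) = ((Zsqrtd.mk m n).re : ℝ) • vv1 α₃ α₄ from rfl,
        show ((n:ℝ) • vv2 α₃ α₄) = ((Zsqrtd.mk m n).im : ℝ) • vv2 α₃ α₄ from rfl,
        ← latvec_shift] at h
    exact latvec_inj h
  · rintro ⟨γ, rfl, rfl⟩
    exact ⟨γ.re, γ.im, by rw [latvec_shift]⟩

lemma Lv_shift (α₃ α₄ : Zsqrtd 2) (v : Fin 4 → ℝ) (m n : ℤ) :
    Lv α₃ α₄ (v + (m:ℝ) • vv1 α₃ α₄ + (n:ℝ) • vv2 α₃ α₄) = Lv α₃ α₄ v := by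
  ext u
  constructor
  · rintro ⟨p, q, rfl⟩
    exact ⟨m + p, n + q, by push_cast; module⟩
  · rintro ⟨p, q, rfl⟩
    exact ⟨p - m, q - n, by push_cast; module⟩


theorem stmt13 (α₃ α₄ : Zsqrtd 2) (hcop : IsCoprime α₃ α₄) :
    (∀ β₁ β₂ β₁' β₂' : Zsqrtd 2,
      Lv α₃ α₄ (latvec β₁ β₂) = Lv α₃ α₄ (latvec β₁' β₂') ↔
        -α₄ * β₁ + α₃ * β₂ = -α₄ * β₁' + α₃ * β₂') ∧
    (∀ β₁ β₂ : Zsqrtd 2,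
      latvec β₁ β₂ ∈ Lv α₃ α₄ (latvec 0 1) ↔
        ∃ x : Zsqrtd 2, β₁ = x * α₃ ∧ β₂ = 1 + x * α₄) := by
  constructor
  · intro β₁ β₂ β₁' β₂'
    constructor
    · intro h
      have hm : latvec β₁ β₂ ∈ Lv α₃ α₄ (latvec β₁' β₂') := by
        rw [← h]; exact ⟨0, 0, by push_cast; module⟩
      obtain ⟨γ, rfl, rfl⟩ := (mem_Lv_iff α₃ α₄ _ _ _ _).mp hm
      ring
    · intro h
      obtain ⟨ξ, η, hξη⟩ := hcop
      have hmem : latvec β₁ β₂ ∈ Lv α₃ α₄ (latvec β₁' β₂') := by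
        rw [mem_Lv_iff]
        refine ⟨ξ * (β₁ - β₁') + η * (β₂ - β₂'), ?_, ?_⟩
        · linear_combination -η * h - (β₁ - β₁') * hξη
        · linear_combination ξ * h - (β₂ - β₂') * hξη
      obtain ⟨m, n, hv⟩ := hmem
      rw [hv, Lv_shift]
  · intro β₁ β₂
    rw [mem_Lv_iff]
    constructor
    · rintro ⟨γ, h1, h2⟩; exact ⟨γ, by simpa using h1, h2⟩
    · rintro ⟨x, h1, h2⟩; exact ⟨x, by simpa using h1, h2⟩


end
end

section
/- Let α₃, α₄ ∈ ℤ[√2] be coprime, let s > 0, and let h = diag(h₁, h₂) ∈ H with h₁, h₂ ∈ SL₂(ℝ). Set (z¹, z²) = ((0,1)h₁, (0,1)h₂) ∈ ℝ² × ℝ², and define I₁ = {x ∈ ℝ : z¹ + x·(α₃,α₄)h₁ ∈ λ^{−2r}T(s)} and I₂ = {x ∈ ℝ : z² + x·(σ(α₃),σ(α₄))h₂ ∈ λ^{2r}𝒲}. Then 𝓛_{v(0,1)}·h ∩ 𝒯(s) = ∅ if and only if 𝓛' ∩ (I₁ × I₂) = ∅. -/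
open MeasureTheory Matrix Set Pointwise

noncomputable section

lemma key_stmt14 (α₃ α₄ : Zsqrtd 2) (s : ℝ) (r : ℤ) (h₁ h₂ : Matrix (Fin 2) (Fin 2) ℝ) (m n : ℤ) :
    Matrix.vecMul (latvec 0 1 + (m:ℝ) • vv1 α₃ α₄ + (n:ℝ) • vv2 α₃ α₄) (bd h₁ h₂) ∈ calT s r ↔
      ((lam ^ (2*r) : ℝ) • (mul2 (0,1) h₁ + emb ⟨m,n⟩ • mul2 (emb α₃, emb α₄) h₁) ∈ Tset s ∧
       (lam ^ (-(2*r)) : ℝ) • (mul2 (0,1) h₂ + embc ⟨m,n⟩ • mul2 (embc α₃, embc α₄) h₂) ∈ Woct) := by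
  have e1 : (lam ^ (2*r) : ℝ) • (mul2 (0,1) h₁ + emb ⟨m,n⟩ • mul2 (emb α₃, emb α₄) h₁)
      = (lam ^ (2*r) * Matrix.vecMul (latvec 0 1 + (m:ℝ) • vv1 α₃ α₄ + (n:ℝ) • vv2 α₃ α₄) (bd h₁ h₂) 0,
         lam ^ (2*r) * Matrix.vecMul (latvec 0 1 + (m:ℝ) • vv1 α₃ α₄ + (n:ℝ) • vv2 α₃ α₄) (bd h₁ h₂) 1) := by
    simp [Matrix.vecMul, dotProduct, bd, latvec, vv1, vv2, emb, embc, mul2,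
      Matrix.vecHead, Matrix.vecTail, -mul_eq_mul_left_iff,
      Fin.sum_univ_four, Prod.ext_iff, Prod.smul_mk, smul_eq_mul]
    constructor <;> ring
  have e2 : (lam ^ (-(2*r)) : ℝ) • (mul2 (0,1) h₂ + embc ⟨m,n⟩ • mul2 (embc α₃, embc α₄) h₂)
      = (lam ^ (-(2*r)) * Matrix.vecMul (latvec 0 1 + (m:ℝ) • vv1 α₃ α₄ + (n:ℝ) • vv2 α₃ α₄) (bd h₁ h₂) 2,
         lam ^ (-(2*r)) * Matrix.vecMul (latvec 0 1 + (m:ℝ) • vv1 α₃ α₄ + (n:ℝ) • vv2 α₃ α₄) (bd h₁ h₂) 3) := by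
    simp [Matrix.vecMul, dotProduct, bd, latvec, vv1, vv2, emb, embc, mul2,
      Matrix.vecHead, Matrix.vecTail, -mul_eq_mul_left_iff,
      Fin.sum_univ_four, Prod.ext_iff, Prod.smul_mk, smul_eq_mul]
    constructor <;> ring
  simp only [calT, Set.mem_setOf_eq, e1, e2]

theorem stmt14 (α₃ α₄ : Zsqrtd 2) (hcop : IsCoprime α₃ α₄) (s : ℝ) (hs : 0 < s) (r : ℤ)
    (hr₁ : lam ^ (2*r) ≤ s ^ ((1:ℝ)/4)) (hr₂ : s ^ ((1:ℝ)/4) < lam ^ (2*r+2))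
    (h₁ h₂ : Matrix (Fin 2) (Fin 2) ℝ) (hd₁ : h₁.det = 1) (hd₂ : h₂.det = 1) :
    ((fun u => Matrix.vecMul u (bd h₁ h₂)) '' Lv α₃ α₄ (latvec 0 1)) ∩ calT s r = ∅ ↔
      Lp ∩
        ({x : ℝ | (lam ^ (2*r) : ℝ) • (mul2 (0,1) h₁ + x • mul2 (emb α₃, emb α₄) h₁) ∈ Tset s} ×ˢ
         {x : ℝ | (lam ^ (-(2*r)) : ℝ) • (mul2 (0,1) h₂ + x • mul2 (embc α₃, embc α₄) h₂) ∈ Woct})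
        = ∅ := by
  rw [Set.eq_empty_iff_forall_notMem, Set.eq_empty_iff_forall_notMem]
  constructor
  · rintro H p ⟨⟨α, rfl⟩, hA, hB⟩
    exact H _ ⟨⟨_, ⟨α.re, α.im, rfl⟩, rfl⟩,
      (key_stmt14 α₃ α₄ s r h₁ h₂ α.re α.im).2 ⟨hA, hB⟩⟩
  · rintro H v ⟨⟨u, ⟨m, n, rfl⟩, rfl⟩, hc⟩
    obtain ⟨hA, hB⟩ := (key_stmt14 α₃ α₄ s r h₁ h₂ m n).1 hc
    exact H (emb ⟨m, n⟩, embc ⟨m, n⟩) ⟨⟨⟨m, n⟩, rfl⟩, hA, hB⟩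

end
end

section
/- Let α₃, α₄ ∈ ℤ[√2] be coprime with α₃ > 0, let s > 0, β₁, β₂ ∈ ℤ[√2], v = v(β₁,β₂) and δ = −α₄β₁ + α₃β₂. Let h = h(x₁,x₂,y₁,y₂,θ₁,θ₂) with x₁, x₂ ∈ ℝ, y₁, y₂ > 0, θ₁, θ₂ ∈ ℝ, and set u₁ = (α₃x₁ + α₄)/(α₃y₁²), u₂ = (σ(α₃)x₂ + σ(α₄))/(σ(α₃)y₂²), and B = α₃y₁·π₂(λ^{−2r}T(s)·k(−θ₁)n(−u₁)) × σ(α₃)y₂·π₂(λ^{2r}𝒲·k(−θ₂)n(−u₂)), where π₂ : ℝ² → ℝ is projection onto the second coordinate. Then Π_v·h ∩ 𝒯(s) = ∅ if and only if (δ, σ(δ)) ∉ B. -/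
/-! A point of `Π_v` is a pair `(q₁, q₂)` with `q₁` on the line `(β₁, β₂) + ℝ(α₃, α₄)` and `q₂` on
its conjugate, and the two blocks of `h` and of `𝒯(s)` act on them independently. Since `α₃ ≠ 0`
(hence `σ(α₃) ≠ 0`), that line is the level set `{q | α₃ q₂ - α₄ q₁ = δ}`. Pulling this linear
functional back along the invertible block `n(x)a(y)k(θ)` gives `w ↦ α₃ y (w k(-θ) n(-u)).2`, so the
line meets `λ^{-2r}T(s)` after applying the block exactly when this functional takes the value `δ` on
the scaled triangle; likewise for the octagon and `σ(δ)`. -/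

open MeasureTheory Matrix Set Pointwise

noncomputable section

lemma emb_eq_toReal (α : Zsqrtd 2) : emb α = Zsqrtd.toReal (by norm_num) α := by
  simp [emb]

lemma embc_eq_emb_star (α : Zsqrtd 2) : embc α = emb (star α) := by
  simp [emb, embc, Zsqrtd.re_star, Zsqrtd.im_star, sub_eq_add_neg]

lemma emb_eq_zero_iff {α : Zsqrtd 2} : emb α = 0 ↔ α = 0 := by
  have hnonsq : ∀ n : ℤ, (2 : ℤ) ≠ n * n := fun n h => by
    simpa [← h] using Int.sq_ne_two_mod_four n
  rw [emb_eq_toReal, map_eq_zero_iff _ (Zsqrtd.toReal_injective _ hnonsq)]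

lemma embc_ne_zero {α : Zsqrtd 2} (h : emb α ≠ 0) : embc α ≠ 0 := by
  rwa [embc_eq_emb_star, Ne, emb_eq_zero_iff, star_eq_zero, ← emb_eq_zero_iff]

def wedge (a q : ℝ × ℝ) : ℝ := a.1 * q.2 - a.2 * q.1

lemma emb_neg_mul_add_mul_eq_wedge (α₃ α₄ β₁ β₂ : Zsqrtd 2) :
    emb (-α₄ * β₁ + α₃ * β₂) = wedge (emb α₃, emb α₄) (emb β₁, emb β₂) := by
  simp only [emb_eq_toReal, map_add, map_mul, map_neg, wedge]
  ring

lemma embc_neg_mul_add_mul_eq_wedge (α₃ α₄ β₁ β₂ : Zsqrtd 2) :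
    embc (-α₄ * β₁ + α₃ * β₂) = wedge (embc α₃, embc α₄) (embc β₁, embc β₂) := by
  simp only [embc_eq_emb_star, star_add, star_mul', star_neg, emb_neg_mul_add_mul_eq_wedge]

lemma mul2_mul2 (p : ℝ × ℝ) (M N : Matrix (Fin 2) (Fin 2) ℝ) :
    mul2 (mul2 p M) N = mul2 p (M * N) := by
  simp only [mul2, Matrix.mul_apply, Fin.sum_univ_two, Prod.mk.injEq]
  constructor <;> ring

lemma mul2_one (p : ℝ × ℝ) : mul2 p 1 = p := by
  simp [mul2]

lemma nmat_mul_nmat (x x' : ℝ) : nmat x * nmat x' = nmat (x + x') := by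
  ext i j
  fin_cases i <;> fin_cases j <;> simp [nmat, Matrix.mul_apply, Fin.sum_univ_two, add_comm]

lemma amat_mul_amat (y y' : ℝ) : amat y * amat y' = amat (y * y') := by
  ext i j
  fin_cases i <;> fin_cases j <;> simp [amat, Matrix.mul_apply, Fin.sum_univ_two, mul_comm]

lemma kmat_mul_kmat (θ θ' : ℝ) : kmat θ * kmat θ' = kmat (θ + θ') := by
  ext i j
  fin_cases i <;> fin_cases j <;>
    simp [kmat, Matrix.mul_apply, Fin.sum_univ_two, Real.cos_add, Real.sin_add] <;> ring

lemma nmat_zero : nmat 0 = 1 := by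
  simp [nmat, Matrix.one_fin_two]

lemma amat_one : amat 1 = 1 := by
  simp [amat, Matrix.one_fin_two]

lemma kmat_zero : kmat 0 = 1 := by
  simp [kmat, Matrix.one_fin_two]

abbrev nak (x y θ : ℝ) : Matrix (Fin 2) (Fin 2) ℝ := nmat x * amat y * kmat θ

lemma nak_inv_mul_nak {y : ℝ} (x θ : ℝ) (hy : y ≠ 0) :
    kmat (-θ) * amat y⁻¹ * nmat (-x) * nak x y θ = 1 := by
  rw [show kmat (-θ) * amat y⁻¹ * nmat (-x) * nak x y θ
      = kmat (-θ) * (amat y⁻¹ * (nmat (-x) * nmat x * amat y)) * kmat θ by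
    simp only [nak, mul_assoc]]
  rw [nmat_mul_nmat, neg_add_cancel, nmat_zero, one_mul, amat_mul_amat, inv_mul_cancel₀ hy,
    amat_one, mul_one, kmat_mul_kmat, neg_add_cancel, kmat_zero]

lemma wedge_add_smul_self (a b : ℝ × ℝ) (c : ℝ) : wedge a (b + c • a) = wedge a b := by
  simp only [wedge, Prod.fst_add, Prod.snd_add, Prod.smul_fst, Prod.smul_snd, smul_eq_mul]
  ring

lemma exists_eq_add_smul_iff_wedge_eq {a b q : ℝ × ℝ} (ha : a.1 ≠ 0) :
    (∃ c : ℝ, q = b + c • a) ↔ wedge a q = wedge a b := by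
  refine ⟨fun ⟨c, hc⟩ => hc ▸ wedge_add_smul_self a b c, fun h => ⟨(q.1 - b.1) / a.1, ?_⟩⟩
  simp only [wedge] at h
  ext
  · simp only [Prod.fst_add, Prod.smul_fst, smul_eq_mul]
    field_simp
    ring
  · simp only [Prod.snd_add, Prod.smul_snd, smul_eq_mul]
    field_simp
    linear_combination h

lemma wedge_eq_snd_mul2_nak {a₃ y : ℝ} (a₄ x θ : ℝ) (q : ℝ × ℝ) (ha₃ : a₃ ≠ 0) (hy : y ≠ 0) :
    wedge (a₃, a₄) q = a₃ * y * (mul2 (mul2 (mul2 q (nak x y θ)) (kmat (-θ)))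
      (nmat (-((a₃ * x + a₄) / (a₃ * y ^ 2))))).2 := by
  rw [mul2_mul2, mul2_mul2, nak, mul_assoc (nmat x * amat y), ← mul_assoc (kmat θ),
    kmat_mul_kmat, add_neg_cancel, kmat_zero, one_mul]
  simp only [wedge, mul2, nmat, amat, Matrix.mul_apply, Fin.sum_univ_two, Matrix.of_apply,
    Matrix.cons_val', Matrix.cons_val_zero, Matrix.cons_val_one, Matrix.empty_val',
    Matrix.cons_val_fin_one]
  field_simp
  ring

lemma exists_smul_mul2_nak_mem_iff {a₃ y sc : ℝ} (a₄ x θ : ℝ) (b : ℝ × ℝ) (T : Set (ℝ × ℝ))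
    (ha₃ : a₃ ≠ 0) (hy : y ≠ 0) (hsc : sc ≠ 0) :
    (∃ c : ℝ, sc • mul2 (b + c • (a₃, a₄)) (nak x y θ) ∈ T) ↔
      ∃ p ∈ T, wedge (a₃, a₄) b = a₃ * y * (mul2 (mul2 (sc⁻¹ • p) (kmat (-θ)))
        (nmat (-((a₃ * x + a₄) / (a₃ * y ^ 2))))).2 := by
  constructor
  · rintro ⟨c, hc⟩
    refine ⟨_, hc, ?_⟩
    rw [inv_smul_smul₀ hsc, ← wedge_eq_snd_mul2_nak _ _ _ _ ha₃ hy, wedge_add_smul_self]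
  · rintro ⟨p, hp, hb⟩
    set q := mul2 (sc⁻¹ • p) (kmat (-θ) * amat y⁻¹ * nmat (-x))
    have hq : mul2 q (nak x y θ) = sc⁻¹ • p := by
      rw [mul2_mul2, nak_inv_mul_nak x θ hy, mul2_one]
    obtain ⟨c, hc⟩ : ∃ c : ℝ, q = b + c • (a₃, a₄) := by
      rw [exists_eq_add_smul_iff_wedge_eq ha₃, wedge_eq_snd_mul2_nak _ _ _ _ ha₃ hy, hq, hb]
    exact ⟨c, by rwa [← hc, hq, smul_inv_smul₀ hsc]⟩

lemma vecMul_bd (p₁ p₂ q₁ q₂ : ℝ) (A B : Matrix (Fin 2) (Fin 2) ℝ) :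
    Matrix.vecMul ![p₁, p₂, q₁, q₂] (bd A B) =
      ![(mul2 (p₁, p₂) A).1, (mul2 (p₁, p₂) A).2, (mul2 (q₁, q₂) B).1, (mul2 (q₁, q₂) B).2] := by
  funext i
  fin_cases i <;> simp [Matrix.vecMul, dotProduct, Fin.sum_univ_four, bd, mul2]

lemma latvec_add_smul_bb1_add_smul_bb2 (α₃ α₄ β₁ β₂ : Zsqrtd 2) (c₁ c₂ : ℝ) :
    latvec β₁ β₂ + c₁ • bb1 α₃ α₄ + c₂ • bb2 α₃ α₄ =
      ![emb β₁ + c₁ * emb α₃, emb β₂ + c₁ * emb α₄,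
        embc β₁ + c₂ * embc α₃, embc β₂ + c₂ * embc α₄] := by
  funext i
  fin_cases i <;> simp [latvec, bb1, bb2]

lemma vecMul_hmat_mem_calT_iff (α₃ α₄ β₁ β₂ : Zsqrtd 2) (c₁ c₂ : ℝ) (s : ℝ) (r : ℤ)
    (x₁ x₂ y₁ y₂ θ₁ θ₂ : ℝ) :
    Matrix.vecMul (latvec β₁ β₂ + c₁ • bb1 α₃ α₄ + c₂ • bb2 α₃ α₄)
        (hmat x₁ x₂ y₁ y₂ θ₁ θ₂) ∈ calT s r ↔
      lam ^ (2 * r) •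
          mul2 ((emb β₁, emb β₂) + c₁ • (emb α₃, emb α₄)) (nak x₁ y₁ θ₁) ∈ Tset s ∧
        lam ^ (-(2 * r)) •
          mul2 ((embc β₁, embc β₂) + c₂ • (embc α₃, embc α₄)) (nak x₂ y₂ θ₂) ∈ Woct := by
  rw [latvec_add_smul_bb1_add_smul_bb2, hmat, vecMul_bd]
  rfl

lemma image_Piv_inter_calT_nonempty_iff (α₃ α₄ β₁ β₂ : Zsqrtd 2) (s : ℝ) (r : ℤ)
    (x₁ x₂ y₁ y₂ θ₁ θ₂ : ℝ) :
    ((fun u => Matrix.vecMul u (hmat x₁ x₂ y₁ y₂ θ₁ θ₂)) ''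
        Piv α₃ α₄ (latvec β₁ β₂) ∩ calT s r).Nonempty ↔
      (∃ c₁ : ℝ, lam ^ (2 * r) •
          mul2 ((emb β₁, emb β₂) + c₁ • (emb α₃, emb α₄)) (nak x₁ y₁ θ₁) ∈ Tset s) ∧
      (∃ c₂ : ℝ, lam ^ (-(2 * r)) •
          mul2 ((embc β₁, embc β₂) + c₂ • (embc α₃, embc α₄)) (nak x₂ y₂ θ₂) ∈ Woct) := by
  constructor
  · rintro ⟨_, ⟨_, ⟨c₁, c₂, rfl⟩, rfl⟩, hmem⟩
    obtain ⟨h₁, h₂⟩ := (vecMul_hmat_mem_calT_iff ..).mp hmem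
    exact ⟨⟨c₁, h₁⟩, ⟨c₂, h₂⟩⟩
  · rintro ⟨⟨c₁, h₁⟩, ⟨c₂, h₂⟩⟩
    exact ⟨_, ⟨_, ⟨c₁, c₂, rfl⟩, rfl⟩, (vecMul_hmat_mem_calT_iff ..).mpr ⟨h₁, h₂⟩⟩

theorem stmt15_general (α₃ α₄ : Zsqrtd 2) (hpos : 0 < emb α₃)
    (s : ℝ) (r : ℤ)
    (β₁ β₂ : Zsqrtd 2) (x₁ x₂ y₁ y₂ θ₁ θ₂ : ℝ) (hy₁ : 0 < y₁) (hy₂ : 0 < y₂) :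
    ((fun u => Matrix.vecMul u (hmat x₁ x₂ y₁ y₂ θ₁ θ₂)) ''
        Piv α₃ α₄ (latvec β₁ β₂)) ∩ calT s r = ∅ ↔
      (emb (-α₄ * β₁ + α₃ * β₂), embc (-α₄ * β₁ + α₃ * β₂)) ∉
        ({u : ℝ | ∃ p ∈ Tset s, u = emb α₃ * y₁ *
            (mul2 (mul2 ((lam ^ (-(2*r)) : ℝ) • p) (kmat (-θ₁)))
              (nmat (-((emb α₃ * x₁ + emb α₄) / (emb α₃ * y₁ ^ 2))))).2} ×ˢ
         {u : ℝ | ∃ p ∈ Woct, u = embc α₃ * y₂ *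
            (mul2 (mul2 ((lam ^ (2*r) : ℝ) • p) (kmat (-θ₂)))
              (nmat (-((embc α₃ * x₂ + embc α₄) / (embc α₃ * y₂ ^ 2))))).2}) := by
  have hlam : lam ≠ 0 := by unfold lam; positivity
  have hα₃ : emb α₃ ≠ 0 := hpos.ne'
  rw [← Set.not_nonempty_iff_eq_empty, not_iff_not, image_Piv_inter_calT_nonempty_iff,
    exists_smul_mul2_nak_mem_iff _ _ _ _ _ hα₃ hy₁.ne' (zpow_ne_zero _ hlam),
    exists_smul_mul2_nak_mem_iff _ _ _ _ _ (embc_ne_zero hα₃) hy₂.ne' (zpow_ne_zero _ hlam),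
    Set.mem_prod, emb_neg_mul_add_mul_eq_wedge, embc_neg_mul_add_mul_eq_wedge]
  simp only [← _root_.zpow_neg, neg_neg, Set.mem_ofPred_eq]

theorem stmt15 (α₃ α₄ : Zsqrtd 2) (hcop : IsCoprime α₃ α₄) (hpos : 0 < emb α₃)
    (s : ℝ) (hs : 0 < s) (r : ℤ)
    (hr₁ : lam ^ (2*r) ≤ s ^ ((1:ℝ)/4)) (hr₂ : s ^ ((1:ℝ)/4) < lam ^ (2*r+2))
    (β₁ β₂ : Zsqrtd 2) (x₁ x₂ y₁ y₂ θ₁ θ₂ : ℝ) (hy₁ : 0 < y₁) (hy₂ : 0 < y₂) :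
    ((fun u => Matrix.vecMul u (hmat x₁ x₂ y₁ y₂ θ₁ θ₂)) ''
        Piv α₃ α₄ (latvec β₁ β₂)) ∩ calT s r = ∅ ↔
      (emb (-α₄ * β₁ + α₃ * β₂), embc (-α₄ * β₁ + α₃ * β₂)) ∉
        ({u : ℝ | ∃ p ∈ Tset s, u = emb α₃ * y₁ *
            (mul2 (mul2 ((lam ^ (-(2*r)) : ℝ) • p) (kmat (-θ₁)))
              (nmat (-((emb α₃ * x₁ + emb α₄) / (emb α₃ * y₁ ^ 2))))).2} ×ˢ
         {u : ℝ | ∃ p ∈ Woct, u = embc α₃ * y₂ *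
            (mul2 (mul2 ((lam ^ (2*r) : ℝ) • p) (kmat (-θ₂)))
              (nmat (-((embc α₃ * x₂ + embc α₄) / (embc α₃ * y₂ ^ 2))))).2}) :=
  stmt15_general α₃ α₄ hpos s r β₁ β₂ x₁ x₂ y₁ y₂ θ₁ θ₂ hy₁ hy₂

end
end

section
/- Let α₃, α₄ ∈ ℤ[√2] be coprime with α₃ > 0. There exists an absolute constant C > 0 (independent of all other data) such that for every s > 0, β₁, β₂ ∈ ℤ[√2] with v = v(β₁,β₂), and h = diag(h₁,h₂) ∈ H, defining J₁ = {x ∈ ℝ : (β₁,β₂)h₁ + x·(α₃,α₄)h₁ ∈ λ^{−2r}T(s)} and J₂ = {x ∈ ℝ : (σ(β₁),σ(β₂))h₂ + x·(σ(α₃),σ(α₄))h₂ ∈ λ^{2r}𝒲}: (i) 𝓛_v·h ∩ 𝒯(s) = ∅ if and only if 𝓛' ∩ (J₁ × J₂) = ∅; (ii) if 𝓛_v·h ∩ 𝒯(s) = ∅ then Leb(J₁)·Leb(J₂) ≤ C, where Leb denotes one-dimensional Lebesgue measure. -/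
open MeasureTheory Matrix Set Pointwise

noncomputable section

/-!
The points of `𝓛_v` are the vectors `v(β₁ + αα₃, β₂ + αα₄)`, `α ∈ ℤ[√2]`. After multiplication by
`diag(h₁, h₂)` their two halves are the points `(β₁,β₂)h₁ + α(α₃,α₄)h₁` and
`(σβ₁,σβ₂)h₂ + σ(α)(σα₃,σα₄)h₂` of two lines, which gives (i). For (ii), `J₁` and `J₂` are
intervals, and every box of area greater than `16λ⁴` meets `𝓛'`: multiplying by a power of the
unit `λ²`, which scales the two coordinates of `𝓛'` by inverse factors, makes both sides of the
box longer than `4`, and such a box contains an explicit point `(m + n√2, m − n√2)`.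
-/

lemma lam_one_lt : 1 < lam := by unfold lam; linarith [Real.sqrt_pos.2 (zero_lt_two' ℝ)]

lemma lam_pos : 0 < lam := zero_lt_one.trans lam_one_lt

lemma emb_add (a b : Zsqrtd 2) : emb (a + b) = emb a + emb b := by
  simp only [emb, Zsqrtd.re_add, Zsqrtd.im_add]; push_cast; ring

lemma embc_add (a b : Zsqrtd 2) : embc (a + b) = embc a + embc b := by
  simp only [embc, Zsqrtd.re_add, Zsqrtd.im_add]; push_cast; ring

lemma emb_mul (a b : Zsqrtd 2) : emb (a * b) = emb a * emb b := by
  simp only [emb, Zsqrtd.re_mul, Zsqrtd.im_mul]; push_cast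
  linear_combination (-(a.im : ℝ) * b.im) * (Real.mul_self_sqrt zero_le_two)

lemma embc_mul (a b : Zsqrtd 2) : embc (a * b) = embc a * embc b := by
  simp only [embc, Zsqrtd.re_mul, Zsqrtd.im_mul]; push_cast
  linear_combination (-(a.im : ℝ) * b.im) * (Real.mul_self_sqrt zero_le_two)

lemma lam_sq : lam ^ 2 = 3 + 2 * Real.sqrt 2 := by
  unfold lam; linear_combination (Real.mul_self_sqrt zero_le_two)

lemma lam_sq_inv : (lam ^ 2)⁻¹ = 3 - 2 * Real.sqrt 2 :=
  inv_eq_of_mul_eq_one_right <| by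
    rw [lam_sq]; linear_combination (-4) * (Real.mul_self_sqrt zero_le_two)

lemma exists_emb_eq_zpow (k : ℤ) :
    ∃ u : Zsqrtd 2, emb u = (lam ^ 2) ^ k ∧ embc u = ((lam ^ 2) ^ k)⁻¹ := by
  have hne : lam ^ 2 ≠ 0 := by positivity [lam_pos]
  induction k using Int.induction_on with
  | zero => exact ⟨1, by simp [emb], by simp [embc]⟩
  | succ k ih =>
    obtain ⟨u, hu, hu'⟩ := ih
    refine ⟨u * ⟨3, 2⟩, ?_, ?_⟩
    · rw [emb_mul, hu, zpow_add_one₀ hne, lam_sq, emb]; push_cast; ring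
    · rw [embc_mul, hu', zpow_add_one₀ hne, mul_inv, lam_sq_inv, embc]; push_cast; ring
  | pred k ih =>
    obtain ⟨u, hu, hu'⟩ := ih
    refine ⟨u * ⟨3, -2⟩, ?_, ?_⟩
    · rw [emb_mul, hu, zpow_sub_one₀ hne, lam_sq_inv, emb]; push_cast; ring
    · rw [embc_mul, hu', zpow_sub_one₀ hne, mul_inv, inv_inv, lam_sq, embc]; push_cast; ring

def linePreimage (c : ℝ) (p q : ℝ × ℝ) (U : Set (ℝ × ℝ)) : Set ℝ := {x | c • (p + x • q) ∈ U}

lemma Convex.ordConnected_linePreimage {U : Set (ℝ × ℝ)} (hU : Convex ℝ U) (c : ℝ)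
    (p q : ℝ × ℝ) : (linePreimage c p q U).OrdConnected := by
  have hline : ⇑(AffineMap.lineMap (c • p) (c • (p + q)) : ℝ →ᵃ[ℝ] ℝ × ℝ) =
      fun x => c • (p + x • q) := by
    ext x <;> simp [AffineMap.lineMap_apply_module] <;> ring
  have := hU.affine_preimage (AffineMap.lineMap (c • p) (c • (p + q)))
  rw [hline] at this
  exact this.ordConnected

lemma convex_Tset (s : ℝ) : Convex ℝ (Tset s) := by
  refine convex_iff_forall_pos.2 ?_
  rintro x ⟨hx₁, hx₂, hx₃⟩ y ⟨hy₁, hy₂, hy₃⟩ a b ha hb hab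
  have habs := (abs_add_le (a * x.2) (b * y.2)).trans_eq
    (by rw [abs_mul, abs_mul, abs_of_pos ha, abs_of_pos hb])
  refine ⟨?_, ?_, habs.trans_lt ?_⟩ <;>
    simp only [Prod.fst_add, Prod.smul_fst, smul_eq_mul] <;> nlinarith

lemma convex_Woct : Convex ℝ Woct := by
  refine convex_iff_forall_pos.2 ?_
  rintro x ⟨hx₁, hx₂, hx₃⟩ y ⟨hy₁, hy₂, hy₃⟩ a b ha hb hab
  have habs : ∀ u v : ℝ, |a * u + b * v| ≤ a * |u| + b * |v| := fun u v =>
    (abs_add_le _ _).trans_eq (by rw [abs_mul, abs_mul, abs_of_pos ha, abs_of_pos hb])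
  have hcomb : ∀ {u v d : ℝ}, u < d → v < d → a * u + b * v < d := fun {_ _ d} hu hv => by
    simpa using (convex_Iio d) hu hv ha.le hb.le hab
  refine ⟨(habs _ _).trans_lt (hcomb hx₁ hy₁), (habs _ _).trans_lt (hcomb hx₂ hy₂),
    (add_le_add (habs _ _) (habs _ _)).trans_lt ?_⟩
  linarith [hcomb hx₃ hy₃]

lemma mul2_add_smul (p q : ℝ × ℝ) (x : ℝ) (M : Matrix (Fin 2) (Fin 2) ℝ) :
    mul2 (p + x • q) M = mul2 p M + x • mul2 q M := by
  ext <;>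
    simp only [mul2, Prod.fst_add, Prod.snd_add, Prod.smul_fst, Prod.smul_snd, smul_eq_mul] <;> ring

lemma vecMul_bd_mem_calT_iff (u : Fin 4 → ℝ) (A B : Matrix (Fin 2) (Fin 2) ℝ) (s : ℝ) (r : ℤ) :
    vecMul u (bd A B) ∈ calT s r ↔
      lam ^ (2 * r) • mul2 (u 0, u 1) A ∈ Tset s ∧
        lam ^ (-(2 * r)) • mul2 (u 2, u 3) B ∈ Woct := by
  simp [calT, bd, mul2, vecHead, vecTail]

lemma latvec_add_mul (β₁ β₂ α₃ α₄ α : Zsqrtd 2) :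
    latvec (β₁ + α * α₃) (β₂ + α * α₄) =
      latvec β₁ β₂ + (α.re : ℝ) • vv1 α₃ α₄ + (α.im : ℝ) • vv2 α₃ α₄ := by
  ext i
  fin_cases i <;> simp [latvec, vv1, vv2, emb_add, emb_mul, embc_add, embc_mul, emb.eq_1 α,
    embc.eq_1 α] <;> ring

lemma Lv_latvec (α₃ α₄ β₁ β₂ : Zsqrtd 2) :
    Lv α₃ α₄ (latvec β₁ β₂) = range fun α => latvec (β₁ + α * α₃) (β₂ + α * α₄) := by
  ext u
  simp only [Lv, mem_ofPred_eq, mem_range, latvec_add_mul]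
  constructor
  · rintro ⟨m, n, rfl⟩
    exact ⟨⟨m, n⟩, rfl⟩
  · rintro ⟨α, rfl⟩
    exact ⟨α.re, α.im, rfl⟩

lemma image_Lv_inter_calT_eq_empty_iff (α₃ α₄ β₁ β₂ : Zsqrtd 2)
    (h₁ h₂ : Matrix (Fin 2) (Fin 2) ℝ) (s : ℝ) (r : ℤ) :
    (fun u => vecMul u (bd h₁ h₂)) '' Lv α₃ α₄ (latvec β₁ β₂) ∩ calT s r = ∅ ↔
      Lp ∩ (linePreimage (lam ^ (2 * r)) (mul2 (emb β₁, emb β₂) h₁)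
          (mul2 (emb α₃, emb α₄) h₁) (Tset s) ×ˢ
        linePreimage (lam ^ (-(2 * r))) (mul2 (embc β₁, embc β₂) h₂)
          (mul2 (embc α₃, embc α₄) h₂) Woct) = ∅ := by
  set J := linePreimage (lam ^ (2 * r)) (mul2 (emb β₁, emb β₂) h₁)
      (mul2 (emb α₃, emb α₄) h₁) (Tset s) ×ˢ
    linePreimage (lam ^ (-(2 * r))) (mul2 (embc β₁, embc β₂) h₂)
      (mul2 (embc α₃, embc α₄) h₂) Woct with hJ
  have key : ∀ α, vecMul (latvec (β₁ + α * α₃) (β₂ + α * α₄)) (bd h₁ h₂) ∈ calT s r ↔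
      (emb α, embc α) ∈ J := by
    intro α
    simp only [hJ, vecMul_bd_mem_calT_iff, mem_prod, linePreimage, mem_ofPred_eq, ← mul2_add_smul,
      Prod.smul_mk, Prod.mk_add_mk, smul_eq_mul, latvec, emb_add, emb_mul, embc_add, embc_mul]
    rfl
  rw [Lv_latvec, ← range_comp, ← not_nonempty_iff_eq_empty, ← not_nonempty_iff_eq_empty,
    not_iff_not]
  constructor
  · rintro ⟨_, ⟨α, rfl⟩, hα⟩
    exact ⟨_, ⟨α, rfl⟩, (key α).1 hα⟩
  · rintro ⟨_, ⟨α, rfl⟩, hα⟩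
    exact ⟨_, ⟨α, rfl⟩, (key α).2 hα⟩

lemma exists_emb_embc_mem_Ioo_of_add_four_lt {a₁ b₁ a₂ b₂ : ℝ} (h₁ : a₁ + 4 < b₁)
    (h₂ : a₂ + 4 < b₂) : ∃ α : Zsqrtd 2, emb α ∈ Ioo a₁ b₁ ∧ embc α ∈ Ioo a₂ b₂ := by
  -- `n` puts `emb α - embc α = 2n√2` just below `a₁ - a₂`, then `m` puts `emb α` in `(a₁, a₁ + 1]`
  set n := ⌊(a₁ - a₂) / (2 * Real.sqrt 2)⌋
  set m := ⌊a₁ - n * Real.sqrt 2⌋ + 1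
  have hn₁ : n * (2 * Real.sqrt 2) ≤ a₁ - a₂ :=
    (le_div_iff₀ (by positivity)).1 (Int.floor_le _)
  have hn₂ : a₁ - a₂ < (n + 1) * (2 * Real.sqrt 2) :=
    (div_lt_iff₀ (by positivity)).1 (Int.lt_floor_add_one _)
  have hm₁ : a₁ - n * Real.sqrt 2 < m := by push_cast [m]; exact Int.lt_floor_add_one _
  have hm₂ : (m : ℝ) ≤ a₁ - n * Real.sqrt 2 + 1 := by
    push_cast [m]; linarith [Int.floor_le (a₁ - n * Real.sqrt 2)]
  refine ⟨⟨m, n⟩, ⟨?_, ?_⟩, ?_, ?_⟩ <;> simp only [emb, embc] <;>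
    nlinarith [Real.sqrt_two_lt_three_halves]

lemma exists_four_lt_zpow_mul_and_four_mul_zpow_lt {L₁ L₂ : ℝ} (hL₁ : 0 < L₁) (hL₂ : 0 < L₂)
    (h : 16 * lam ^ 4 < L₁ * L₂) : ∃ j : ℤ, 4 < (lam ^ 2) ^ j * L₁ ∧ 4 * (lam ^ 2) ^ j < L₂ := by
  obtain ⟨j, hj₁, hj₂⟩ := exists_mem_Ico_zpow (div_pos hL₂ hL₁)
    (one_lt_pow₀ (one_lt_pow₀ lam_one_lt two_ne_zero) two_ne_zero)
  set c := (lam ^ 2) ^ j with hc_def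
  have hsq : ((lam ^ 2) ^ 2) ^ j = c ^ 2 := by
    rw [hc_def]
    generalize lam ^ 2 = x
    rw [← zpow_natCast, ← zpow_natCast, ← _root_.zpow_mul, ← _root_.zpow_mul, mul_comm]
  rw [hsq, le_div_iff₀ hL₁] at hj₁
  rw [zpow_add_one₀ (by positivity [lam_pos]), hsq, ← pow_mul, div_lt_iff₀ hL₁] at hj₂
  norm_num at hj₂
  have hc : 0 < c := zpow_pos (pow_pos lam_pos 2) j
  refine ⟨j, lt_of_pow_lt_pow_left₀ 2 (by positivity) ?_, lt_of_pow_lt_pow_left₀ 2 hL₂.le ?_⟩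
  · nlinarith [pow_pos lam_pos 4]
  · nlinarith [one_lt_pow₀ lam_one_lt four_ne_zero]

lemma exists_emb_embc_mem_Ioo {a₁ b₁ a₂ b₂ : ℝ} (h₁ : a₁ ≤ b₁)
    (h : 16 * lam ^ 4 < (b₁ - a₁) * (b₂ - a₂)) :
    ∃ α : Zsqrtd 2, emb α ∈ Ioo a₁ b₁ ∧ embc α ∈ Ioo a₂ b₂ := by
  have hlam : 0 < 16 * lam ^ 4 := by positivity [lam_pos]
  have hL₁ : 0 < b₁ - a₁ :=
    (sub_nonneg.2 h₁).lt_of_ne (by rintro h'; rw [← h', zero_mul] at h; linarith)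
  have hL₂ : 0 < b₂ - a₂ := pos_of_mul_pos_right (hlam.trans h) hL₁.le
  obtain ⟨j, hjL₁, hjL₂⟩ := exists_four_lt_zpow_mul_and_four_mul_zpow_lt hL₁ hL₂ h
  set c := (lam ^ 2) ^ j with hc_def
  have hc : 0 < c := zpow_pos (pow_pos lam_pos 2) j
  obtain ⟨α, ⟨hα₁, hα₂⟩, hα₃, hα₄⟩ := exists_emb_embc_mem_Ioo_of_add_four_lt
    (a₁ := c * a₁) (b₁ := c * b₁) (a₂ := a₂ / c) (b₂ := b₂ / c) (by linarith)
    (by rw [div_add' _ _ _ hc.ne', div_lt_div_iff_of_pos_right hc]; linarith)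
  obtain ⟨u, hu, hu'⟩ := exists_emb_eq_zpow (-j)
  rw [_root_.zpow_neg, ← hc_def] at hu hu'
  rw [inv_inv] at hu'
  refine ⟨u * α, ⟨?_, ?_⟩, ?_, ?_⟩ <;> simp only [emb_mul, embc_mul, hu, hu']
  · exact (lt_inv_mul_iff₀ hc).2 hα₁
  · exact (inv_mul_lt_iff₀ hc).2 hα₂
  · exact (div_lt_iff₀' hc).1 hα₃
  · exact (lt_div_iff₀' hc).1 hα₄

lemma abs_sub_mul_abs_sub_le_of_Lp_inter_prod_eq_empty {S T : Set ℝ} (hS : S.OrdConnected)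
    (hT : T.OrdConnected) (h : Lp ∩ S ×ˢ T = ∅) {x y x' y' : ℝ} (hx : x ∈ S) (hy : y ∈ S)
    (hx' : x' ∈ T) (hy' : y' ∈ T) : |x - y| * |x' - y'| ≤ 16 * lam ^ 4 := by
  by_contra! hlt
  rw [← max_sub_min_eq_abs', ← max_sub_min_eq_abs'] at hlt
  obtain ⟨α, hα, hα'⟩ := exists_emb_embc_mem_Ioo min_le_max hlt
  refine (eq_empty_iff_forall_notMem.1 h) (emb α, embc α) ⟨⟨α, rfl⟩, ?_, ?_⟩
  · exact hS.uIcc_subset hx hy (Ioo_subset_Icc_self hα)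
  · exact hT.uIcc_subset hx' hy' (Ioo_subset_Icc_self hα')

lemma volume_mul_volume_le_of_Lp_inter_prod_eq_empty {S T : Set ℝ} (hS : S.OrdConnected)
    (hT : T.OrdConnected) (h : Lp ∩ S ×ˢ T = ∅) :
    volume S * volume T ≤ ENNReal.ofReal (16 * lam ^ 4) := by
  refine (mul_le_mul' (Real.volume_le_diam S) (Real.volume_le_diam T)).trans
    (ENNReal.mul_le_of_forall_lt fun a ha b hb => ?_)
  obtain ⟨x, hx, y, hy, hxy⟩ : ∃ x ∈ S, ∃ y ∈ S, a < edist x y := by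
    simpa using Metric.ediam_le_iff.not.1 ha.not_ge
  obtain ⟨x', hx', y', hy', hxy'⟩ : ∃ x' ∈ T, ∃ y' ∈ T, b < edist x' y' := by
    simpa using Metric.ediam_le_iff.not.1 hb.not_ge
  calc a * b ≤ edist x y * edist x' y' := mul_le_mul' hxy.le hxy'.le
    _ = ENNReal.ofReal (|x - y| * |x' - y'|) := by
      rw [edist_dist, edist_dist, Real.dist_eq, Real.dist_eq, ENNReal.ofReal_mul (abs_nonneg _)]
    _ ≤ _ := ENNReal.ofReal_le_ofReal
      (abs_sub_mul_abs_sub_le_of_Lp_inter_prod_eq_empty hS hT h hx hy hx' hy')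

theorem stmt16_general (α₃ α₄ : Zsqrtd 2) :
    ∃ C > (0:ℝ), ∀ (s : ℝ), 0 < s → ∀ r : ℤ,
      lam ^ (2*r) ≤ s ^ ((1:ℝ)/4) → s ^ ((1:ℝ)/4) < lam ^ (2*r+2) →
      ∀ (β₁ β₂ : Zsqrtd 2) (h₁ h₂ : Matrix (Fin 2) (Fin 2) ℝ), h₁.det = 1 → h₂.det = 1 →
      (((fun u => Matrix.vecMul u (bd h₁ h₂)) '' Lv α₃ α₄ (latvec β₁ β₂)) ∩ calT s r = ∅ ↔
        Lp ∩
          ({x : ℝ | (lam ^ (2*r) : ℝ) •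
              (mul2 (emb β₁, emb β₂) h₁ + x • mul2 (emb α₃, emb α₄) h₁) ∈ Tset s} ×ˢ
           {x : ℝ | (lam ^ (-(2*r)) : ℝ) •
              (mul2 (embc β₁, embc β₂) h₂ + x • mul2 (embc α₃, embc α₄) h₂) ∈ Woct}) = ∅) ∧
      (((fun u => Matrix.vecMul u (bd h₁ h₂)) '' Lv α₃ α₄ (latvec β₁ β₂)) ∩ calT s r = ∅ →
        volume {x : ℝ | (lam ^ (2*r) : ℝ) •
              (mul2 (emb β₁, emb β₂) h₁ + x • mul2 (emb α₃, emb α₄) h₁) ∈ Tset s} *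
        volume {x : ℝ | (lam ^ (-(2*r)) : ℝ) •
              (mul2 (embc β₁, embc β₂) h₂ + x • mul2 (embc α₃, embc α₄) h₂) ∈ Woct}
          ≤ ENNReal.ofReal C) := by
  refine ⟨16 * lam ^ 4, by positivity [lam_pos], fun s _ r _ _ β₁ β₂ h₁ h₂ _ _ => ?_⟩
  have hiff := image_Lv_inter_calT_eq_empty_iff α₃ α₄ β₁ β₂ h₁ h₂ s r
  exact ⟨hiff, fun hempty => volume_mul_volume_le_of_Lp_inter_prod_eq_empty
    ((convex_Tset s).ordConnected_linePreimage _ _ _)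
    (convex_Woct.ordConnected_linePreimage _ _ _) (hiff.1 hempty)⟩

theorem stmt16 (α₃ α₄ : Zsqrtd 2) (hcop : IsCoprime α₃ α₄) (hpos : 0 < emb α₃) :
    ∃ C > (0:ℝ), ∀ (s : ℝ), 0 < s → ∀ r : ℤ,
      lam ^ (2*r) ≤ s ^ ((1:ℝ)/4) → s ^ ((1:ℝ)/4) < lam ^ (2*r+2) →
      ∀ (β₁ β₂ : Zsqrtd 2) (h₁ h₂ : Matrix (Fin 2) (Fin 2) ℝ), h₁.det = 1 → h₂.det = 1 →
      (((fun u => Matrix.vecMul u (bd h₁ h₂)) '' Lv α₃ α₄ (latvec β₁ β₂)) ∩ calT s r = ∅ ↔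
        Lp ∩
          ({x : ℝ | (lam ^ (2*r) : ℝ) •
              (mul2 (emb β₁, emb β₂) h₁ + x • mul2 (emb α₃, emb α₄) h₁) ∈ Tset s} ×ˢ
           {x : ℝ | (lam ^ (-(2*r)) : ℝ) •
              (mul2 (embc β₁, embc β₂) h₂ + x • mul2 (embc α₃, embc α₄) h₂) ∈ Woct}) = ∅) ∧
      (((fun u => Matrix.vecMul u (bd h₁ h₂)) '' Lv α₃ α₄ (latvec β₁ β₂)) ∩ calT s r = ∅ →
        volume {x : ℝ | (lam ^ (2*r) : ℝ) •
              (mul2 (emb β₁, emb β₂) h₁ + x • mul2 (emb α₃, emb α₄) h₁) ∈ Tset s} *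
        volume {x : ℝ | (lam ^ (-(2*r)) : ℝ) •
              (mul2 (embc β₁, embc β₂) h₂ + x • mul2 (embc α₃, embc α₄) h₂) ∈ Woct}
          ≤ ENNReal.ofReal C) :=
  stmt16_general α₃ α₄

end
end
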